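/- arXiv:2407.05105 — 5 statements merged into one kernel-verified Lean document; each statement's English description precedes it below -/
import Mathlib

section
/- Let q₁, q₂ : ℝ → ℝ be measurable and square-integrable on (0,1), let c₁, c₂ ∈ ℝ and r₁, r₂ ≥ 0. Set m_j = ∫₀¹ q_j(t) dt, and assume s_j² := ∫₀¹ q_j(t)² dt − m_j² > 0 for j = 1,2. Define μ_j = c_j + (r_j/2)m_j, σ_j = (r_j/2)·√(s_j²), and ρ₁₂ = (∫₀¹ q₁(t)q₂(t) dt − m₁m₂)/√(s₁²·s₂²). Then ∫₀¹ ((c₁ + (r₁/2)q₁(t)) − (c₂ + (r₂/2)q₂(t)))² dt = (μ₁ − μ₂)² + (σ₁ − σ₂)² + 2σ₁σ₂(1 − ρ₁₂). -/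
/-!
With `a = r₁/2`, `b = r₂/2` and `Z = (c₁ + a q₁) - (c₂ + b q₂)` on the probability space `(0,1)`,
one has `∫ Z² = (∫ Z)² + Var Z`, the mean of `Z` is `μ₁ - μ₂`, and bilinearity of the covariance gives
`Var Z = a² Var q₁ - 2ab Cov(q₁, q₂) + b² Var q₂ = σ₁² - 2σ₁σ₂ρ₁₂ + σ₂²`.
-/

open MeasureTheory ProbabilityTheory

section

variable {Ω : Type*} {mΩ : MeasurableSpace Ω} {μ : Measure Ω} [IsProbabilityMeasure μ]
  {X Y : Ω → ℝ}

lemma integral_sq_eq_sq_integral_add_variance (hX : MemLp X 2 μ) :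
    ∫ ω, X ω ^ 2 ∂μ = (∫ ω, X ω ∂μ) ^ 2 + Var[X; μ] := by
  rw [variance_eq_sub hX]
  simp only [Pi.pow_apply]
  ring

lemma variance_affine_sub_affine (hX : MemLp X 2 μ) (hY : MemLp Y 2 μ) (a b c d : ℝ) :
    Var[fun ω ↦ (c + a * X ω) - (d + b * Y ω); μ]
      = a ^ 2 * Var[X; μ] - 2 * a * b * cov[X, Y; μ] + b ^ 2 * Var[Y; μ] := by
  have hshift : (fun ω ↦ (c + a * X ω) - (d + b * Y ω))
      = fun ω ↦ (c - d) + (a * X ω - b * Y ω) := by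
    funext ω; ring
  rw [hshift, variance_const_add (X := fun ω ↦ a * X ω - b * Y ω)
      ((hX.const_mul a).sub (hY.const_mul b)).aestronglyMeasurable,
    variance_fun_sub (hX.const_mul a) (hY.const_mul b), variance_const_mul, variance_const_mul,
    covariance_const_mul_left, covariance_const_mul_right]
  ring

lemma integral_affine_sub_affine (hX : Integrable X μ) (hY : Integrable Y μ) (a b c d : ℝ) :
    ∫ ω, (c + a * X ω) - (d + b * Y ω) ∂μ
      = (c + a * ∫ ω, X ω ∂μ) - (d + b * ∫ ω, Y ω ∂μ) := by
  have hX' : Integrable (fun ω ↦ c + a * X ω) μ := (integrable_const c).add (hX.const_mul a)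
  have hY' : Integrable (fun ω ↦ d + b * Y ω) μ := (integrable_const d).add (hY.const_mul b)
  rw [integral_sub hX' hY',
    integral_add (integrable_const c) (hX.const_mul a),
    integral_add (integrable_const d) (hY.const_mul b),
    integral_const, integral_const, integral_const_mul, integral_const_mul]
  simp

theorem integral_affine_sub_affine_sq (hX : MemLp X 2 μ) (hY : MemLp Y 2 μ) (a b c d : ℝ) :
    ∫ ω, ((c + a * X ω) - (d + b * Y ω)) ^ 2 ∂μ
      = ((c + a * ∫ ω, X ω ∂μ) - (d + b * ∫ ω, Y ω ∂μ)) ^ 2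
        + a ^ 2 * Var[X; μ] - 2 * a * b * cov[X, Y; μ] + b ^ 2 * Var[Y; μ] := by
  have hZ : MemLp (fun ω ↦ (c + a * X ω) - (d + b * Y ω)) 2 μ :=
    ((memLp_const c).add (hX.const_mul a)).sub ((memLp_const d).add (hY.const_mul b))
  rw [integral_sq_eq_sq_integral_add_variance hZ,
    integral_affine_sub_affine (hX.integrable one_le_two) (hY.integrable one_le_two),
    variance_affine_sub_affine hX hY]
  ring

end

instance isProbabilityMeasure_volume_restrict_Ioo_zero_one :
    IsProbabilityMeasure (volume.restrict (Set.Ioo (0 : ℝ) 1)) :=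
  ⟨by simp [Real.volume_Ioo]⟩

theorem mallows_sq_mu_sigma_rho_general (q₁ q₂ : ℝ → ℝ) (c₁ c₂ r₁ r₂ : ℝ)
    (hq₁ : MemLp q₁ 2 (volume.restrict (Set.Ioo (0:ℝ) 1)))
    (hq₂ : MemLp q₂ 2 (volume.restrict (Set.Ioo (0:ℝ) 1)))
    (m₁ m₂ s₁sq s₂sq μ₁ μ₂ σ₁ σ₂ ρ₁₂ : ℝ)
    (hm₁ : m₁ = ∫ t in Set.Ioo (0:ℝ) 1, q₁ t)
    (hm₂ : m₂ = ∫ t in Set.Ioo (0:ℝ) 1, q₂ t)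
    (hs₁ : s₁sq = (∫ t in Set.Ioo (0:ℝ) 1, (q₁ t) ^ 2) - m₁ ^ 2)
    (hs₂ : s₂sq = (∫ t in Set.Ioo (0:ℝ) 1, (q₂ t) ^ 2) - m₂ ^ 2)
    (hs₁pos : 0 < s₁sq) (hs₂pos : 0 < s₂sq)
    (hμ₁ : μ₁ = c₁ + r₁ / 2 * m₁) (hμ₂ : μ₂ = c₂ + r₂ / 2 * m₂)
    (hσ₁ : σ₁ = r₁ / 2 * Real.sqrt s₁sq) (hσ₂ : σ₂ = r₂ / 2 * Real.sqrt s₂sq)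
    (hρ : ρ₁₂ = ((∫ t in Set.Ioo (0:ℝ) 1, q₁ t * q₂ t) - m₁ * m₂)
            / Real.sqrt (s₁sq * s₂sq)) :
    (∫ t in Set.Ioo (0:ℝ) 1, ((c₁ + r₁ / 2 * q₁ t) - (c₂ + r₂ / 2 * q₂ t)) ^ 2)
      = (μ₁ - μ₂) ^ 2 + (σ₁ - σ₂) ^ 2 + 2 * σ₁ * σ₂ * (1 - ρ₁₂) := by
  have hvar₁ : Var[q₁; volume.restrict (Set.Ioo (0:ℝ) 1)] = s₁sq := by
    rw [variance_eq_sub hq₁, hs₁, hm₁]; rfl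
  have hvar₂ : Var[q₂; volume.restrict (Set.Ioo (0:ℝ) 1)] = s₂sq := by
    rw [variance_eq_sub hq₂, hs₂, hm₂]; rfl
  have hcov : cov[q₁, q₂; volume.restrict (Set.Ioo (0:ℝ) 1)]
      = (∫ t in Set.Ioo (0:ℝ) 1, q₁ t * q₂ t) - m₁ * m₂ := by
    rw [covariance_eq_sub hq₁ hq₂, hm₁, hm₂]; rfl
  have hσ₁sq : σ₁ ^ 2 = (r₁ / 2) ^ 2 * s₁sq := by rw [hσ₁, mul_pow, Real.sq_sqrt hs₁pos.le]
  have hσ₂sq : σ₂ ^ 2 = (r₂ / 2) ^ 2 * s₂sq := by rw [hσ₂, mul_pow, Real.sq_sqrt hs₂pos.le]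
  have hσρ : σ₁ * σ₂ * ρ₁₂
      = r₁ / 2 * (r₂ / 2) * ((∫ t in Set.Ioo (0:ℝ) 1, q₁ t * q₂ t) - m₁ * m₂) := by
    rw [hσ₁, hσ₂, hρ, Real.sqrt_mul hs₁pos.le]
    field_simp
  rw [integral_affine_sub_affine_sq hq₁ hq₂, hvar₁, hvar₂, hcov, ← hm₁, ← hm₂, ← hμ₁, ← hμ₂]
  linear_combination -hσ₁sq - hσ₂sq + 2 * hσρ

/-- The squared Mallows distance expressed through the means, standard deviations
and the correlation between the two quantile functions:
`d_M² = (μ₁ − μ₂)² + (σ₁ − σ₂)² + 2σ₁σ₂(1 − ρ₁₂)`. -/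
theorem mallows_sq_mu_sigma_rho (q₁ q₂ : ℝ → ℝ) (c₁ c₂ r₁ r₂ : ℝ)
    (hr₁ : 0 ≤ r₁) (hr₂ : 0 ≤ r₂)
    (hmeas₁ : Measurable q₁) (hmeas₂ : Measurable q₂)
    (hq₁ : MemLp q₁ 2 (volume.restrict (Set.Ioo (0:ℝ) 1)))
    (hq₂ : MemLp q₂ 2 (volume.restrict (Set.Ioo (0:ℝ) 1)))
    (m₁ m₂ s₁sq s₂sq μ₁ μ₂ σ₁ σ₂ ρ₁₂ : ℝ)
    (hm₁ : m₁ = ∫ t in Set.Ioo (0:ℝ) 1, q₁ t)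
    (hm₂ : m₂ = ∫ t in Set.Ioo (0:ℝ) 1, q₂ t)
    (hs₁ : s₁sq = (∫ t in Set.Ioo (0:ℝ) 1, (q₁ t) ^ 2) - m₁ ^ 2)
    (hs₂ : s₂sq = (∫ t in Set.Ioo (0:ℝ) 1, (q₂ t) ^ 2) - m₂ ^ 2)
    (hs₁pos : 0 < s₁sq) (hs₂pos : 0 < s₂sq)
    (hμ₁ : μ₁ = c₁ + r₁ / 2 * m₁) (hμ₂ : μ₂ = c₂ + r₂ / 2 * m₂)
    (hσ₁ : σ₁ = r₁ / 2 * Real.sqrt s₁sq) (hσ₂ : σ₂ = r₂ / 2 * Real.sqrt s₂sq)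
    (hρ : ρ₁₂ = ((∫ t in Set.Ioo (0:ℝ) 1, q₁ t * q₂ t) - m₁ * m₂)
            / Real.sqrt (s₁sq * s₂sq)) :
    (∫ t in Set.Ioo (0:ℝ) 1, ((c₁ + r₁ / 2 * q₁ t) - (c₂ + r₂ / 2 * q₂ t)) ^ 2)
      = (μ₁ - μ₂) ^ 2 + (σ₁ - σ₂) ^ 2 + 2 * σ₁ * σ₂ * (1 - ρ₁₂) :=
  mallows_sq_mu_sigma_rho_general q₁ q₂ c₁ c₂ r₁ r₂ hq₁ hq₂ m₁ m₂ s₁sq s₂sq μ₁ μ₂ σ₁ σ₂ ρ₁₂ hm₁ hm₂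
    hs₁ hs₂ hs₁pos hs₂pos hμ₁ hμ₂ hσ₁ hσ₂ hρ
end

section
/- Let p ∈ ℕ, let c₁, c₂, r₁, r₂ : Fin p → ℝ, and for each i let q_i : ℝ → ℝ be measurable and square-integrable on (0,1). Set ψ(i) = ∫₀¹ q_i(t) dt and δ(i) = (∫₀¹ q_i(t)² dt)/4, let H be the (2p)×(2p) block matrix H = fromBlocks(I_p, (1/2)·diagonal(ψ), (1/2)·diagonal(ψ), diagonal(δ)), and let y₁ = (c₁, r₁) and y₂ = (c₂, r₂) be the concatenated vectors in ℝ^{2p} (indexed by Fin p ⊕ Fin p). Then ∑_{i} ∫₀¹ ((c₁(i) + (r₁(i)/2)q_i(t)) − (c₂(i) + (r₂(i)/2)q_i(t)))² dt = (y₁ − y₂)ᵀ H (y₁ − y₂). -/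
open MeasureTheory Matrix

/-! Pointwise, the integrand is the square of the affine function `(c₁ − c₂) + ((r₁ − r₂)/2) q`,
so each univariate distance expands into the constant, the first moment and the second moment of
`q` with coefficients `(c₁ − c₂)²`, `(c₁ − c₂)(r₁ − r₂)` and `(r₁ − r₂)²`; these are exactly the
contributions of the identity block, the two off-diagonal blocks `Ψ/2` and the block `Δ` to the
quadratic form. -/

theorem integral_const_add_mul_sq {α : Type*} [MeasurableSpace α] {μ : Measure α}
    [IsFiniteMeasure μ] {f : α → ℝ} (hf : MemLp f 2 μ) (a b : ℝ) :
    ∫ x, (a + b * f x) ^ 2 ∂μ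
      = a ^ 2 * μ.real Set.univ + 2 * a * b * ∫ x, f x ∂μ + b ^ 2 * ∫ x, f x ^ 2 ∂μ := by
  have hf₁ : Integrable f μ := hf.integrable one_le_two
  have hf₂ : Integrable (fun x => f x ^ 2) μ := hf.integrable_sq
  calc ∫ x, (a + b * f x) ^ 2 ∂μ
      = ∫ x, (a ^ 2 + 2 * a * b * f x) + b ^ 2 * f x ^ 2 ∂μ := by congr with x; ring
    _ = a ^ 2 * μ.real Set.univ + 2 * a * b * ∫ x, f x ∂μ + b ^ 2 * ∫ x, f x ^ 2 ∂μ := by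
      have hlin : Integrable (fun x => a ^ 2 + 2 * a * b * f x) μ :=
        (integrable_const _).add (hf₁.const_mul _)
      rw [integral_add hlin (hf₂.const_mul _), integral_add (integrable_const _) (hf₁.const_mul _),
        integral_const, integral_const_mul, integral_const_mul, smul_eq_mul, mul_comm]

theorem sumElim_dotProduct_fromBlocks_mulVec_sumElim {l m R : Type*} [Fintype l] [Fintype m]
    [NonUnitalNonAssocSemiring R] (A : Matrix l l R) (B : Matrix l m R) (C : Matrix m l R) (D : Matrix m m R)
    (u : l → R) (v : m → R) :
    Sum.elim u v ⬝ᵥ fromBlocks A B C D *ᵥ Sum.elim u v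
      = u ⬝ᵥ A *ᵥ u + u ⬝ᵥ B *ᵥ v + (v ⬝ᵥ C *ᵥ u + v ⬝ᵥ D *ᵥ v) := by
  rw [fromBlocks_mulVec, Sum.elim_comp_inl, Sum.elim_comp_inr, sumElim_dotProduct_sumElim,
    dotProduct_add, dotProduct_add]

theorem dotProduct_diagonal_mulVec {m R : Type*} [Fintype m] [DecidableEq m] [NonUnitalSemiring R]
    (u d v : m → R) : u ⬝ᵥ diagonal d *ᵥ v = ∑ i, u i * d i * v i := by
  simp only [dotProduct, mulVec_diagonal, mul_assoc]

theorem mallows_sq_as_mahalanobis_general (p : ℕ) (c₁ c₂ r₁ r₂ : Fin p → ℝ)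
    (q : Fin p → ℝ → ℝ)
    (hq : ∀ i, MemLp (q i) 2 (volume.restrict (Set.Ioo (0:ℝ) 1)))
    (ψ δ : Fin p → ℝ)
    (hψ : ∀ i, ψ i = ∫ t in Set.Ioo (0:ℝ) 1, q i t)
    (hδ : ∀ i, δ i = (∫ t in Set.Ioo (0:ℝ) 1, (q i t) ^ 2) / 4)
    (H : Matrix (Fin p ⊕ Fin p) (Fin p ⊕ Fin p) ℝ)
    (hH : H = Matrix.fromBlocks 1 ((1 / 2 : ℝ) • Matrix.diagonal ψ)
        ((1 / 2 : ℝ) • Matrix.diagonal ψ) (Matrix.diagonal δ))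
    (y₁ y₂ : Fin p ⊕ Fin p → ℝ)
    (hy₁ : y₁ = Sum.elim c₁ r₁) (hy₂ : y₂ = Sum.elim c₂ r₂) :
    (∑ i, ∫ t in Set.Ioo (0:ℝ) 1,
        ((c₁ i + r₁ i / 2 * q i t) - (c₂ i + r₂ i / 2 * q i t)) ^ 2)
      = (y₁ - y₂) ⬝ᵥ H.mulVec (y₁ - y₂) := by
  subst hy₁ hy₂ hH
  have hmallows : ∀ i, ∫ t in Set.Ioo (0:ℝ) 1,
      ((c₁ i + r₁ i / 2 * q i t) - (c₂ i + r₂ i / 2 * q i t)) ^ 2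
        = (c₁ i - c₂ i) ^ 2 + (c₁ i - c₂ i) * (r₁ i - r₂ i) * ψ i + (r₁ i - r₂ i) ^ 2 * δ i := by
    intro i
    have hvol : (volume.restrict (Set.Ioo (0:ℝ) 1)).real Set.univ = 1 := by simp
    calc _ = ∫ t in Set.Ioo (0:ℝ) 1, ((c₁ i - c₂ i) + (r₁ i - r₂ i) / 2 * q i t) ^ 2 := by
          congr with t; ring
      _ = _ := by rw [integral_const_add_mul_sq (hq i), hvol, hψ, hδ]; ring
  rw [Finset.sum_congr rfl fun i _ => hmallows i, ← Sum.elim_sub_sub,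
    sumElim_dotProduct_fromBlocks_mulVec_sumElim, one_mulVec, smul_mulVec, smul_mulVec,
    dotProduct_smul, dotProduct_smul, dotProduct_diagonal_mulVec, dotProduct_diagonal_mulVec,
    dotProduct_diagonal_mulVec, dotProduct]
  simp only [smul_eq_mul, Pi.sub_apply, Finset.mul_sum, ← Finset.sum_add_distrib]
  exact Finset.sum_congr rfl fun i _ => by ring

/-- The multivariate squared Mallows distance equals a Mahalanobis-type quadratic form
`(y₁ − y₂)ᵀ H (y₁ − y₂)` on the joint vector of centres and ranges, with
`H = fromBlocks(I, Ψ/2, Ψ/2, Δ)` built from the first two moments of the latent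
quantile functions. -/
theorem mallows_sq_as_mahalanobis (p : ℕ) (c₁ c₂ r₁ r₂ : Fin p → ℝ)
    (q : Fin p → ℝ → ℝ)
    (hmeas : ∀ i, Measurable (q i))
    (hq : ∀ i, MemLp (q i) 2 (volume.restrict (Set.Ioo (0:ℝ) 1)))
    (ψ δ : Fin p → ℝ)
    (hψ : ∀ i, ψ i = ∫ t in Set.Ioo (0:ℝ) 1, q i t)
    (hδ : ∀ i, δ i = (∫ t in Set.Ioo (0:ℝ) 1, (q i t) ^ 2) / 4)
    (H : Matrix (Fin p ⊕ Fin p) (Fin p ⊕ Fin p) ℝ)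
    (hH : H = Matrix.fromBlocks 1 ((1 / 2 : ℝ) • Matrix.diagonal ψ)
        ((1 / 2 : ℝ) • Matrix.diagonal ψ) (Matrix.diagonal δ))
    (y₁ y₂ : Fin p ⊕ Fin p → ℝ)
    (hy₁ : y₁ = Sum.elim c₁ r₁) (hy₂ : y₂ = Sum.elim c₂ r₂) :
    (∑ i, ∫ t in Set.Ioo (0:ℝ) 1,
        ((c₁ i + r₁ i / 2 * q i t) - (c₂ i + r₂ i / 2 * q i t)) ^ 2)
      = (y₁ - y₂) ⬝ᵥ H.mulVec (y₁ - y₂) :=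
  mallows_sq_as_mahalanobis_general p c₁ c₂ r₁ r₂ q hq ψ δ hψ hδ H hH y₁ y₂ hy₁ hy₂
end

section
/- Let (Ω, 𝔽, P) be a probability space, p ∈ ℕ, and let C, R : Ω → (Fin p → ℝ) be random vectors each of whose components is square-integrable. Let δ, ψ : Fin p → ℝ satisfy ψ(i)² ≤ 4·δ(i) for every i. Define f : (Fin p → ℝ) × (Fin p → ℝ) → ℝ by f(c, r) = E[ ∑_i ( (C_i − c(i))² + δ(i)(R_i − r(i))² + ψ(i)(C_i − c(i))(R_i − r(i)) ) ]. Then for all c, r, f(E[C], E[R]) ≤ f(c, r); that is, the vector of componentwise means (μ_C, μ_R) is a global minimiser of f. -/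
/-!
Each summand is the quadratic form `Q(x, y) = x² + δ y² + ψ x y` evaluated at `(C − c, R − r)`,
and `ψ² ≤ 4δ` makes `Q` positive semidefinite. Expanding around the means gives the bias–variance
decomposition `E[Q(G − c, H − r)] = E[Q(G − E G, H − E H)] + Q(E G − c, E H − r)`: the cross terms
are linear in the centred variables and integrate to zero. The bias term is nonnegative, so each
summand, and hence `f`, is minimised at the means.
-/

open MeasureTheory
open scoped ProbabilityTheory

def mallowsForm (δ ψ x y : ℝ) : ℝ :=
  x ^ 2 + δ * y ^ 2 + ψ * x * y

section mallowsForm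

variable {δ ψ : ℝ}

theorem mallowsForm_nonneg (hδψ : ψ ^ 2 ≤ 4 * δ) (x y : ℝ) : 0 ≤ mallowsForm δ ψ x y := by
  unfold mallowsForm
  -- `4 Q(x, y) = (2x + ψy)² + (4δ − ψ²) y²`
  nlinarith [sq_nonneg (2 * x + ψ * y), sq_nonneg y]

theorem mallowsForm_add (x y a b : ℝ) :
    mallowsForm δ ψ (x + a) (y + b)
      = mallowsForm δ ψ x y + ((2 * a + ψ * b) * x + (2 * δ * b + ψ * a) * y)
        + mallowsForm δ ψ a b := by
  unfold mallowsForm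
  ring

variable {Ω : Type*} [MeasurableSpace Ω] {P : Measure Ω} {g h : Ω → ℝ}

theorem MeasureTheory.MemLp.integrable_mallowsForm (hg : MemLp g 2 P) (hh : MemLp h 2 P) :
    Integrable (fun ω => mallowsForm δ ψ (g ω) (h ω)) P :=
  (hg.integrable_sq.add (hh.integrable_sq.const_mul δ)).add
    (((hg.integrable_mul hh).const_mul ψ).congr
      (.of_forall fun ω => by simp only [Pi.mul_apply]; ring))

variable [IsProbabilityMeasure P]

theorem integral_mallowsForm_sub_eq (hg : MemLp g 2 P) (hh : MemLp h 2 P) (c r : ℝ) :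
    ∫ ω, mallowsForm δ ψ (g ω - c) (h ω - r) ∂P
      = ∫ ω, mallowsForm δ ψ (g ω - P[g]) (h ω - P[h]) ∂P
        + mallowsForm δ ψ (P[g] - c) (P[h] - r) := by
  set a := P[g] - c
  set b := P[h] - r
  have hg₀ : MemLp (fun ω => g ω - P[g]) 2 P := hg.sub (memLp_const _)
  have hh₀ : MemLp (fun ω => h ω - P[h]) 2 P := hh.sub (memLp_const _)
  have hcross_int : Integrable (fun ω => (2 * a + ψ * b) * (g ω - P[g])
      + (2 * δ * b + ψ * a) * (h ω - P[h])) P :=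
    ((hg₀.integrable one_le_two).const_mul _).add ((hh₀.integrable one_le_two).const_mul _)
  have hcross : ∫ ω, ((2 * a + ψ * b) * (g ω - P[g])
      + (2 * δ * b + ψ * a) * (h ω - P[h])) ∂P = 0 := by
    rw [integral_add ((hg₀.integrable one_le_two).const_mul _)
      ((hh₀.integrable one_le_two).const_mul _), integral_const_mul, integral_const_mul,
      integral_sub (hg.integrable one_le_two) (integrable_const _),
      integral_sub (hh.integrable one_le_two) (integrable_const _)]
    simp
  have hsplit (ω : Ω) : mallowsForm δ ψ (g ω - c) (h ω - r)
      = mallowsForm δ ψ (g ω - P[g]) (h ω - P[h])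
        + ((2 * a + ψ * b) * (g ω - P[g]) + (2 * δ * b + ψ * a) * (h ω - P[h]))
        + mallowsForm δ ψ a b := by
    rw [← mallowsForm_add, sub_add_sub_cancel, sub_add_sub_cancel]
  simp_rw [hsplit]
  rw [integral_add ((hg₀.integrable_mallowsForm hh₀).fun_add hcross_int) (integrable_const _),
    integral_add (hg₀.integrable_mallowsForm hh₀) hcross_int, hcross, integral_const]
  simp

theorem integral_mallowsForm_sub_mean_le (hδψ : ψ ^ 2 ≤ 4 * δ)
    (hg : MemLp g 2 P) (hh : MemLp h 2 P) (c r : ℝ) :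
    ∫ ω, mallowsForm δ ψ (g ω - P[g]) (h ω - P[h]) ∂P
      ≤ ∫ ω, mallowsForm δ ψ (g ω - c) (h ω - r) ∂P := by
  rw [integral_mallowsForm_sub_eq hg hh c r]
  exact le_add_of_nonneg_right (mallowsForm_nonneg hδψ _ _)

end mallowsForm

/-- The population barycentre: the vector of componentwise means `(E[C], E[R])`
globally minimises the expected squared Mallows distance
`f(c,r) = E[∑ᵢ (Cᵢ − cᵢ)² + δᵢ(Rᵢ − rᵢ)² + ψᵢ(Cᵢ − cᵢ)(Rᵢ − rᵢ)]`,
provided `ψᵢ² ≤ 4δᵢ` for all `i`. -/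
theorem population_barycentre_minimises {Ω : Type*} [MeasurableSpace Ω]
    (P : Measure Ω) [IsProbabilityMeasure P] (p : ℕ)
    (C R : Ω → Fin p → ℝ)
    (hC : ∀ i, MemLp (fun ω => C ω i) 2 P)
    (hR : ∀ i, MemLp (fun ω => R ω i) 2 P)
    (δ ψ : Fin p → ℝ) (hδψ : ∀ i, ψ i ^ 2 ≤ 4 * δ i)
    (f : (Fin p → ℝ) → (Fin p → ℝ) → ℝ)
    (hf : ∀ c r, f c r = ∫ ω, ∑ i,
        ((C ω i - c i) ^ 2 + δ i * (R ω i - r i) ^ 2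
          + ψ i * (C ω i - c i) * (R ω i - r i)) ∂P) :
    ∀ c r, f (fun i => ∫ ω, C ω i ∂P) (fun i => ∫ ω, R ω i ∂P) ≤ f c r := by
  have hf_sum (c r : Fin p → ℝ) :
      f c r = ∑ i, ∫ ω, mallowsForm (δ i) (ψ i) (C ω i - c i) (R ω i - r i) ∂P :=
    (hf c r).trans <| integral_finsetSum _ fun i _ =>
      ((hC i).sub (memLp_const (c i))).integrable_mallowsForm ((hR i).sub (memLp_const (r i)))
  intro c r
  rw [hf_sum, hf_sum]
  exact Finset.sum_le_sum fun i _ =>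
    integral_mallowsForm_sub_mean_le (hδψ i) (hC i) (hR i) (c i) (r i)
end

section
/- Let p, n ∈ ℕ with n ≥ 1, let c, r : Fin n → (Fin p → ℝ) be finite data, and let δ, ψ : Fin p → ℝ satisfy ψ(i)² ≤ 4·δ(i) for all i. Define g(c₀, r₀) = (1/n) ∑_{j} ∑_{i} ( (c_j(i) − c₀(i))² + δ(i)(r_j(i) − r₀(i))² + ψ(i)(c_j(i) − c₀(i))(r_j(i) − r₀(i)) ). Then g attains its global minimum at the componentwise sample means, i.e., for all c₀, r₀, g(c̄, r̄) ≤ g(c₀, r₀), where c̄(i) = (1/n)∑_j c_j(i) and r̄(i) = (1/n)∑_j r_j(i). -/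
/-!
Coordinatewise, the objective is a sum over the sample of the binary quadratic form
`Q(u, v) = u² + δ v² + ψ u v`, which is positive semidefinite when `ψ² ≤ 4δ`
since `4 Q(u, v) = (2u + ψv)² + (4δ - ψ²) v²`. Splitting each deviation from `(x, y)` as the
deviation from the sample mean plus the offset of the mean gives the parallel-axis identity
`∑ⱼ Q(aⱼ - x, bⱼ - y) = ∑ⱼ Q(aⱼ - ā, bⱼ - b̄) + n Q(ā - x, b̄ - y)`: the cross terms are linear in
the deviations from the mean, which sum to zero.
-/

open Finset

noncomputable section

def quadForm (d q u v : ℝ) : ℝ := u ^ 2 + d * v ^ 2 + q * u * v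

theorem quadForm_nonneg {d q : ℝ} (h : q ^ 2 ≤ 4 * d) (u v : ℝ) : 0 ≤ quadForm d q u v := by
  have key : 4 * quadForm d q u v = (2 * u + q * v) ^ 2 + (4 * d - q ^ 2) * v ^ 2 := by
    unfold quadForm; ring
  have hd : 0 ≤ 4 * d - q ^ 2 := sub_nonneg.2 h
  have : 0 ≤ (2 * u + q * v) ^ 2 + (4 * d - q ^ 2) * v ^ 2 := by positivity
  linarith

section SampleMean

variable {ι : Type*} [Fintype ι]

def sampleMean (a : ι → ℝ) : ℝ := (1 / Fintype.card ι : ℝ) * ∑ j, a j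

theorem sum_sub_sampleMean (a : ι → ℝ) : ∑ j, (a j - sampleMean a) = 0 := by
  rcases isEmpty_or_nonempty ι with _ | _
  · simp
  · simp [sampleMean, sum_sub_distrib]

theorem sum_quadForm_sub_eq (d q : ℝ) (a b : ι → ℝ) (x y : ℝ) :
    ∑ j, quadForm d q (a j - x) (b j - y) =
      ∑ j, quadForm d q (a j - sampleMean a) (b j - sampleMean b)
        + Fintype.card ι * quadForm d q (sampleMean a - x) (sampleMean b - y) := by
  set u := sampleMean a - x
  set v := sampleMean b - y
  have split : ∀ j, quadForm d q (a j - x) (b j - y) =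
      quadForm d q (a j - sampleMean a) (b j - sampleMean b) + quadForm d q u v
        + (2 * u + q * v) * (a j - sampleMean a) + (2 * d * v + q * u) * (b j - sampleMean b) := by
    intro j; unfold quadForm; ring
  simp only [split, sum_add_distrib, ← mul_sum, sum_sub_sampleMean, sum_const, card_univ,
    nsmul_eq_mul, mul_zero, add_zero]

theorem sum_quadForm_sub_sampleMean_le {d q : ℝ} (h : q ^ 2 ≤ 4 * d) (a b : ι → ℝ) (x y : ℝ) :
    ∑ j, quadForm d q (a j - sampleMean a) (b j - sampleMean b) ≤
      ∑ j, quadForm d q (a j - x) (b j - y) := by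
  rw [sum_quadForm_sub_eq d q a b x y]
  exact le_add_of_nonneg_right (mul_nonneg (Nat.cast_nonneg _) (quadForm_nonneg h _ _))

end SampleMean

end

theorem sample_barycentre_minimises_general (p n : ℕ)
    (c r : Fin n → Fin p → ℝ)
    (δ ψ : Fin p → ℝ) (hδψ : ∀ i, ψ i ^ 2 ≤ 4 * δ i)
    (g : (Fin p → ℝ) → (Fin p → ℝ) → ℝ)
    (hg : ∀ c₀ r₀, g c₀ r₀ = (1 / n : ℝ) * ∑ j, ∑ i,
        ((c j i - c₀ i) ^ 2 + δ i * (r j i - r₀ i) ^ 2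
          + ψ i * (c j i - c₀ i) * (r j i - r₀ i))) :
    ∀ c₀ r₀, g (fun i => (1 / n : ℝ) * ∑ j, c j i) (fun i => (1 / n : ℝ) * ∑ j, r j i)
      ≤ g c₀ r₀ := by
  intro c₀ r₀
  have hmean : ∀ a : Fin n → Fin p → ℝ,
      (fun i => (1 / n : ℝ) * ∑ j, a j i) = fun i => sampleMean (a · i) := by
    intro a; simp [sampleMean]
  rw [hmean c, hmean r, hg, hg]
  refine mul_le_mul_of_nonneg_left ?_ (by positivity)
  rw [sum_comm (s := (univ : Finset (Fin n))), sum_comm (s := (univ : Finset (Fin n)))]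
  exact sum_le_sum fun i _ => sum_quadForm_sub_sampleMean_le (hδψ i) (c · i) (r · i) (c₀ i) (r₀ i)

/-- The sample barycentre: the componentwise sample means `(c̄, r̄)` globally minimise
the average of the squared Mallows distances to the sample, provided `ψᵢ² ≤ 4δᵢ`. -/
theorem sample_barycentre_minimises (p n : ℕ) (hn : 1 ≤ n)
    (c r : Fin n → Fin p → ℝ)
    (δ ψ : Fin p → ℝ) (hδψ : ∀ i, ψ i ^ 2 ≤ 4 * δ i)
    (g : (Fin p → ℝ) → (Fin p → ℝ) → ℝ)
    (hg : ∀ c₀ r₀, g c₀ r₀ = (1 / n : ℝ) * ∑ j, ∑ i,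
        ((c j i - c₀ i) ^ 2 + δ i * (r j i - r₀ i) ^ 2
          + ψ i * (c j i - c₀ i) * (r j i - r₀ i))) :
    ∀ c₀ r₀, g (fun i => (1 / n : ℝ) * ∑ j, c j i) (fun i => (1 / n : ℝ) * ∑ j, r j i)
      ≤ g c₀ r₀ :=
  sample_barycentre_minimises_general p n c r δ ψ hδψ g hg
end

section
/- Let (Ω, 𝔽, P) be a probability space, let C₁, C₂, R₁, R₂ : Ω → ℝ be square-integrable random variables, and let q₁, q₂ : ℝ → ℝ be measurable and square-integrable on (0,1). Write μ_{C_i} = E[C_i] and μ_{R_i} = E[R_i]. Then E[ ∫₀¹ ( (C₁ − μ_{C₁}) + ((R₁ − μ_{R₁})/2)·q₁(t) )·( (C₂ − μ_{C₂}) + ((R₂ − μ_{R₂})/2)·q₂(t) ) dt ] = Cov(C₁, C₂) + ((∫₀¹ q₁(t)q₂(t) dt)/4)·Cov(R₁, R₂) + ((∫₀¹ q₂(t) dt)/2)·Cov(C₁, R₂) + ((∫₀¹ q₁(t) dt)/2)·Cov(C₂, R₁), where Cov(Y, Z) = E[(Y − E Y)(Z − E Z)]. -/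
/-!
Expanding the product, the inner integral over `t` is a bilinear expression in the centred
variables whose coefficients are `∫ q₁ q₂`, `∫ q₁` and `∫ q₂`, because `(0, 1)` has measure one.
Square-integrability makes every centred product integrable in `ω`, so the outer expectation
splits term by term into covariances.
-/

open MeasureTheory

/-- Covariance of two real random variables. -/
noncomputable def cov {Ω : Type*} [MeasurableSpace Ω] (P : MeasureTheory.Measure Ω)
    (X Y : Ω → ℝ) : ℝ :=
  ∫ ω, (X ω - ∫ ω', X ω' ∂P) * (Y ω - ∫ ω', Y ω' ∂P) ∂P

instance isProbabilityMeasure_restrict_Ioo_zero_one :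
    IsProbabilityMeasure (volume.restrict (Set.Ioo (0:ℝ) 1)) :=
  ⟨by simp [Real.volume_Ioo]⟩

theorem integral_affine_mul_affine {α : Type*} [MeasurableSpace α] {ν : Measure α}
    [IsProbabilityMeasure ν] {f g : α → ℝ} (hf : Integrable f ν) (hg : Integrable g ν)
    (hfg : Integrable (f * g) ν) (a b c d : ℝ) :
    ∫ t, (a + c * f t) * (b + d * g t) ∂ν
      = a * b + a * d * ∫ t, g t ∂ν + b * c * ∫ t, f t ∂ν + c * d * ∫ t, f t * g t ∂ν := by
  have hexpand : (fun t => (a + c * f t) * (b + d * g t))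
      = fun t => a * b + (a * d) * g t + (b * c) * f t + (c * d) * (f * g) t := by
    funext t; simp only [Pi.mul_apply]; ring
  rw [hexpand, integral_add, integral_add, integral_add, integral_const, integral_const_mul,
    integral_const_mul, integral_const_mul]
  · simp [Pi.mul_apply]
  all_goals fun_prop

theorem integrable_centered_mul {Ω : Type*} [MeasurableSpace Ω] {P : Measure Ω}
    [IsFiniteMeasure P] {X Y : Ω → ℝ} (hX : MemLp X 2 P) (hY : MemLp Y 2 P) :
    Integrable (fun ω => (X ω - ∫ ω', X ω' ∂P) * (Y ω - ∫ ω', Y ω' ∂P)) P :=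
  (hX.sub (memLp_const _)).integrable_mul (hY.sub (memLp_const _))

theorem covB_eq_general (Ω : Type*) [MeasurableSpace Ω]
    (P : Measure Ω) [IsProbabilityMeasure P]
    (C₁ C₂ R₁ R₂ : Ω → ℝ)
    (hC₁ : MemLp C₁ 2 P) (hC₂ : MemLp C₂ 2 P)
    (hR₁ : MemLp R₁ 2 P) (hR₂ : MemLp R₂ 2 P)
    (q₁ q₂ : ℝ → ℝ)
    (hq₁ : MemLp q₁ 2 (volume.restrict (Set.Ioo (0:ℝ) 1)))
    (hq₂ : MemLp q₂ 2 (volume.restrict (Set.Ioo (0:ℝ) 1))) :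
    (∫ ω, (∫ t in Set.Ioo (0:ℝ) 1,
        ((C₁ ω - ∫ ω', C₁ ω' ∂P) + (R₁ ω - ∫ ω', R₁ ω' ∂P) / 2 * q₁ t)
          * ((C₂ ω - ∫ ω', C₂ ω' ∂P) + (R₂ ω - ∫ ω', R₂ ω' ∂P) / 2 * q₂ t)) ∂P)
      = cov P C₁ C₂
        + (∫ t in Set.Ioo (0:ℝ) 1, q₁ t * q₂ t) / 4 * cov P R₁ R₂
        + (∫ t in Set.Ioo (0:ℝ) 1, q₂ t) / 2 * cov P C₁ R₂
        + (∫ t in Set.Ioo (0:ℝ) 1, q₁ t) / 2 * cov P C₂ R₁ := by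
  set mC₁ := ∫ ω, C₁ ω ∂P
  set mC₂ := ∫ ω, C₂ ω ∂P
  set mR₁ := ∫ ω, R₁ ω ∂P
  set mR₂ := ∫ ω, R₂ ω ∂P
  have hinner : ∀ ω, (∫ t in Set.Ioo (0:ℝ) 1,
        ((C₁ ω - mC₁) + (R₁ ω - mR₁) / 2 * q₁ t) * ((C₂ ω - mC₂) + (R₂ ω - mR₂) / 2 * q₂ t))
      = (C₁ ω - mC₁) * (C₂ ω - mC₂)
        + (∫ t in Set.Ioo (0:ℝ) 1, q₁ t * q₂ t) / 4 * ((R₁ ω - mR₁) * (R₂ ω - mR₂))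
        + (∫ t in Set.Ioo (0:ℝ) 1, q₂ t) / 2 * ((C₁ ω - mC₁) * (R₂ ω - mR₂))
        + (∫ t in Set.Ioo (0:ℝ) 1, q₁ t) / 2 * ((C₂ ω - mC₂) * (R₁ ω - mR₁)) := fun ω => by
    rw [integral_affine_mul_affine (hq₁.integrable one_le_two) (hq₂.integrable one_le_two)
      (hq₁.integrable_mul hq₂)]
    ring
  have hCC := integrable_centered_mul hC₁ hC₂
  have hRR := (integrable_centered_mul hR₁ hR₂).const_mul
    ((∫ t in Set.Ioo (0:ℝ) 1, q₁ t * q₂ t) / 4)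
  have hCR := (integrable_centered_mul hC₁ hR₂).const_mul ((∫ t in Set.Ioo (0:ℝ) 1, q₂ t) / 2)
  have hRC := (integrable_centered_mul hC₂ hR₁).const_mul ((∫ t in Set.Ioo (0:ℝ) 1, q₁ t) / 2)
  simp only [hinner]
  rw [integral_add, integral_add, integral_add, integral_const_mul, integral_const_mul,
    integral_const_mul]
  · rfl
  · exact hCC
  · exact hRR
  · exact hCC.add hRR
  · exact hCR
  · exact (hCC.add hRR).add hCR
  · exact hRC

/-- The barycentre-based covariance between two interval-valued random variables:
`Cov_B(X₁,X₂) = Cov(C₁,C₂) + (𝔈(U₁,U₂)/4)Cov(R₁,R₂) + (E(U₂)/2)Cov(C₁,R₂)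
  + (E(U₁)/2)Cov(C₂,R₁)`. -/
theorem covB_eq (Ω : Type*) [MeasurableSpace Ω]
    (P : Measure Ω) [IsProbabilityMeasure P]
    (C₁ C₂ R₁ R₂ : Ω → ℝ)
    (hC₁ : MemLp C₁ 2 P) (hC₂ : MemLp C₂ 2 P)
    (hR₁ : MemLp R₁ 2 P) (hR₂ : MemLp R₂ 2 P)
    (q₁ q₂ : ℝ → ℝ)
    (hmeas₁ : Measurable q₁) (hmeas₂ : Measurable q₂)
    (hq₁ : MemLp q₁ 2 (volume.restrict (Set.Ioo (0:ℝ) 1)))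
    (hq₂ : MemLp q₂ 2 (volume.restrict (Set.Ioo (0:ℝ) 1))) :
    (∫ ω, (∫ t in Set.Ioo (0:ℝ) 1,
        ((C₁ ω - ∫ ω', C₁ ω' ∂P) + (R₁ ω - ∫ ω', R₁ ω' ∂P) / 2 * q₁ t)
          * ((C₂ ω - ∫ ω', C₂ ω' ∂P) + (R₂ ω - ∫ ω', R₂ ω' ∂P) / 2 * q₂ t)) ∂P)
      = cov P C₁ C₂
        + (∫ t in Set.Ioo (0:ℝ) 1, q₁ t * q₂ t) / 4 * cov P R₁ R₂
        + (∫ t in Set.Ioo (0:ℝ) 1, q₂ t) / 2 * cov P C₁ R₂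
        + (∫ t in Set.Ioo (0:ℝ) 1, q₁ t) / 2 * cov P C₂ R₁ :=
  covB_eq_general Ω P C₁ C₂ R₁ R₂ hC₁ hC₂ hR₁ hR₂ q₁ q₂ hq₁ hq₂
end
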